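/- In the lattice grid labeling of P_1[m+1] × P_2[n+1] (n ≥ m ≥ 2) where the m edge-classes of P_1[m+1] (in the order u_1u_3, u_2u_4, ..., u_{m-1}u_{m+1}, u_mu_{m+1}) receive, across the n+1 columns, the consecutive even blocks 2,...,2n+2; 2n+4,...,4n+4; ...; 2mn+2m-2n,...,2mn+2m (each block assigned in usual or reversed column order according to an alternating U/R pattern starting with U), the restricted sums f⁺_1 at the degree-≥2-in-P_1 vertices satisfy f⁺_1(u_3,v_j) < f⁺_1(u_4,v_j) < ... < f⁺_1(u_{m+1},v_j) for every column j, and f⁺_1(u_i,v_j) is independent of j for each 3 ≤ i ≤ m+1. -/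
import Mathlib


open Finset SimpleGraph

set_option maxHeartbeats 1000000

open scoped Classical in
/-- The sum of the labels of all edges incident to `v`. -/
noncomputable def vertexSum {V : Type*} [Fintype V] (G : SimpleGraph V)
    (f : Sym2 V → ℕ) (v : V) : ℕ :=
  ∑ w ∈ Finset.univ.filter (fun w => G.Adj v w), f s(v, w)

/-- `P_1[m+1]`: the path on vertices `u_1, …, u_{m+1}` (0-based: `0, …, m`) with edge set
`{u_i u_{i+2} : 1 ≤ i ≤ m-1} ∪ {u_m u_{m+1}}`. -/
def reindexedPath (m : ℕ) : SimpleGraph (Fin (m + 1)) :=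
  SimpleGraph.fromRel (fun a b => (a : ℕ) + 2 = (b : ℕ) ∨ ((a : ℕ) = m - 1 ∧ (b : ℕ) = m))

/-- The lattice grid `P_1[m+1] □ P_2[n+1]`, where `P_1` carries the re-indexed edge set
and `P_2[n+1]` is the usual path `v_1 v_2 … v_{n+1}`. -/
def latticeGrid (m n : ℕ) : SimpleGraph (Fin (m + 1) × Fin (n + 1)) :=
  reindexedPath m □ pathGraph (n + 1)

/-- The smaller endpoint (0-based) of the `i`-th edge (1-based) of `P_1[m+1]` in the
order `u_1u_3, u_2u_4, …, u_{m-1}u_{m+1}, u_mu_{m+1}`. -/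
def edgeFst (m i : ℕ) : ℕ := if i = m then m - 1 else i - 1

/-- The larger endpoint (0-based) of the `i`-th edge (1-based) of `P_1[m+1]`. -/
def edgeSnd (m i : ℕ) : ℕ := if i = m then m else i + 1

/-- The position (1-based) of the `i`-th edge of `P_1[m+1]` along the path traversal
`u_1, u_3, u_5, …, u_4, u_2`; the edge is marked `U` when this position is odd and `R`
when it is even, so that `u_1u_3` is marked `U` and edges sharing a vertex get
different marks. -/
def edgePos (m i : ℕ) : ℕ :=
  if i = m then m / 2 + 1 else if i % 2 = 1 then (i + 1) / 2 else m + 1 - i / 2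

/-- Phase 1 label of the copy of the `i`-th edge of `P_1[m+1]` (1-based, `1 ≤ i ≤ m`) in
column `j` (1-based, `1 ≤ j ≤ n+1`): the `i`-th block of even numbers
`2(i-1)(n+1)+2, …, 2i(n+1)` is distributed over the columns in usual order for a
`U`-edge and in reversed order for an `R`-edge. -/
def lab1 (m n i j : ℕ) : ℕ :=
  2 * (i - 1) * (n + 1) + (if edgePos m i % 2 = 1 then 2 * j else 2 * (n + 2 - j))

/-- `t`: the number of even numbers in `{2mn+2m+1, …, 2mn+m+n}` (the even labels not
used in Phase 1). -/
def tval (m n : ℕ) : ℕ :=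
  ((Finset.Icc (2 * m * n + 2 * m + 1) (2 * m * n + m + n)).filter (fun x => Even x)).card

/-- `s`: the number of odd numbers in `{1, …, 2mn+m+n}` (so `s + t = mn + n`). -/
def sval (m n : ℕ) : ℕ := m * n + n - tval m n

/-- The merged sequence `C : c_1, …, c_{mn+n}` obtained from the odd numbers
`a_1 < … < a_s` of `{1, …, 2mn+m+n}` and the unused even numbers `b_1 < … < b_t` by the
pattern `a_1, …, a_{s-t}, b_1, a_{s-t+1}, b_2, …, b_t, a_s`. -/
def cseq (m n k : ℕ) : ℕ :=
  if k ≤ sval m n - tval m n then 2 * k - 1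
  else if (k - (sval m n - tval m n)) % 2 = 1 then
    2 * m * n + 2 * m + 2 * ((k - (sval m n - tval m n) + 1) / 2)
  else 2 * (sval m n - tval m n + (k - (sval m n - tval m n)) / 2) - 1

theorem edgeFst_lt' (m i : ℕ) (h : i ≤ m) : edgeFst m i < m + 1 := by
  unfold edgeFst; split <;> omega

theorem edgeSnd_lt' (m i : ℕ) (h : i ≤ m) : edgeSnd m i < m + 1 := by
  unfold edgeSnd; split <;> omega

open scoped Classical in
/-- The restricted vertex sum `f⁺₁(u,v)`: the sum of the labels of the
`P_1`-direction edges incident to `(u, v)` in the lattice grid. -/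
noncomputable def vertexSum1 (m n : ℕ) (f : Sym2 (Fin (m + 1) × Fin (n + 1)) → ℕ)
    (p : Fin (m + 1) × Fin (n + 1)) : ℕ :=
  ∑ a ∈ Finset.univ.filter (fun a => (reindexedPath m).Adj p.1 a), f s(p, (a, p.2))

/-- For the Phase-1 labeling of the lattice grid (`n ≥ m ≥ 2`): the `m` edge classes of
`P_1[m+1]` receive, across the `n+1` columns, consecutive even blocks in usual or
reversed column order according to the alternating `U`/`R` pattern starting with `U`.
Then the restricted sums `f⁺₁(u_i, v_j)` for `3 ≤ i ≤ m+1` are independent of the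
column `j` and satisfy `f⁺₁(u_3,v_j) < f⁺₁(u_4,v_j) < … < f⁺₁(u_{m+1},v_j)`. -/
theorem latticeGrid_phase1_restricted_sums (m n : ℕ) (hm : 2 ≤ m) (hmn : m ≤ n)
    (f : Sym2 (Fin (m + 1) × Fin (n + 1)) → ℕ)
    (hf1 : ∀ i j : ℕ, ∀ _hi1 : 1 ≤ i, ∀ _hi2 : i ≤ m, ∀ _hj1 : 1 ≤ j, ∀ _hj2 : j ≤ n + 1,
      f s(((⟨edgeFst m i, by unfold edgeFst; split <;> omega⟩ : Fin (m + 1)),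
           (⟨j - 1, by omega⟩ : Fin (n + 1))),
          ((⟨edgeSnd m i, by unfold edgeSnd; split <;> omega⟩ : Fin (m + 1)),
           (⟨j - 1, by omega⟩ : Fin (n + 1)))) = lab1 m n i j) :
    (∀ j : Fin (n + 1), ∀ a b : ℕ, ∀ _ha : 2 ≤ a, ∀ _hab : a < b, ∀ _hb : b ≤ m,
      vertexSum1 m n f (⟨a, by omega⟩, j) < vertexSum1 m n f (⟨b, by omega⟩, j)) ∧
    (∀ a : ℕ, ∀ _ha : 2 ≤ a, ∀ _ha2 : a ≤ m, ∀ j j' : Fin (n + 1),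
      vertexSum1 m n f (⟨a, by omega⟩, j) = vertexSum1 m n f (⟨a, by omega⟩, j')) := by
  classical
  have key : ∀ (x : ℕ) (hx1 : 2 ≤ x) (hx2 : x ≤ m) (j : Fin (n + 1)),
      vertexSum1 m n f (⟨x, by omega⟩, j)
        = (n + 1) * (if x = m then 4 * m - 6 else 4 * x - 4) + 2 * (n + 2) := by
    intro x hx1 hx2 j
    have hjlt : (j : ℕ) < n + 1 := j.isLt
    have hf : ∀ (i : ℕ) (h1 : 1 ≤ i) (h2 : i ≤ m),
        f s(((⟨edgeFst m i, edgeFst_lt' m i h2⟩ : Fin (m + 1)), j),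
            ((⟨edgeSnd m i, edgeSnd_lt' m i h2⟩ : Fin (m + 1)), j))
          = lab1 m n i ((j : ℕ) + 1) := by
      intro i h1 h2
      exact hf1 i ((j : ℕ) + 1) h1 h2 (by omega) (by omega)
    have lab1_add : ∀ i1 i2 : ℕ, edgePos m i1 % 2 ≠ edgePos m i2 % 2 →
        lab1 m n i1 ((j : ℕ) + 1) + lab1 m n i2 ((j : ℕ) + 1)
          = 2 * (i1 - 1) * (n + 1) + 2 * (i2 - 1) * (n + 1) + 2 * (n + 2) := by
      intro i1 i2 hpar
      unfold lab1
      generalize 2 * (i1 - 1) * (n + 1) = A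
      generalize 2 * (i2 - 1) * (n + 1) = B
      split_ifs <;> omega
    have hmk : ∀ (y z : ℕ) (hy : y < m + 1) (hz : z < m + 1), y = z →
        (⟨y, hy⟩ : Fin (m + 1)) = ⟨z, hz⟩ := by
      intro y z hy hz h; subst h; rfl
    by_cases hxm : x = m
    · -- x = m : neighbors x-2 and x-1, edges x-1 and x (the special edge)
      have hset : Finset.univ.filter
            (fun a => (reindexedPath m).Adj (⟨x, by omega⟩ : Fin (m + 1)) a)
          = {(⟨x - 2, by omega⟩ : Fin (m + 1)), (⟨x - 1, by omega⟩ : Fin (m + 1))} := by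
        ext a
        have ha := a.isLt
        simp only [Finset.mem_filter, Finset.mem_univ, true_and, reindexedPath,
          SimpleGraph.fromRel_adj, Finset.mem_insert, Finset.mem_singleton, Fin.ext_iff,
          ne_eq]
        omega
      have hne : (⟨x - 2, by omega⟩ : Fin (m + 1)) ≠ ⟨x - 1, by omega⟩ := by
        simp only [ne_eq, Fin.mk.injEq]; omega
      have hi1a : 1 ≤ x - 1 := by omega
      have hi1b : x - 1 ≤ m := by omega
      have hi2a : 1 ≤ x := by omega
      have hi2b : x ≤ m := by omega
      have emk1a : (⟨edgeFst m (x - 1), edgeFst_lt' m (x - 1) hi1b⟩ : Fin (m + 1))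
          = ⟨x - 2, by omega⟩ :=
        hmk _ _ _ _ (by unfold edgeFst; split <;> omega)
      have emk1b : (⟨edgeSnd m (x - 1), edgeSnd_lt' m (x - 1) hi1b⟩ : Fin (m + 1))
          = ⟨x, by omega⟩ :=
        hmk _ _ _ _ (by unfold edgeSnd; split <;> omega)
      have emk2a : (⟨edgeFst m x, edgeFst_lt' m x hi2b⟩ : Fin (m + 1))
          = ⟨x - 1, by omega⟩ :=
        hmk _ _ _ _ (by unfold edgeFst; split <;> omega)
      have emk2b : (⟨edgeSnd m x, edgeSnd_lt' m x hi2b⟩ : Fin (m + 1))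
          = ⟨x, by omega⟩ :=
        hmk _ _ _ _ (by unfold edgeSnd; split <;> omega)
      have hpar : edgePos m (x - 1) % 2 ≠ edgePos m x % 2 := by
        unfold edgePos; split_ifs <;> omega
      have efin : 2 * (x - 1 - 1) * (n + 1) + 2 * (x - 1) * (n + 1) + 2 * (n + 2)
          = (n + 1) * (4 * m - 6) + 2 * (n + 2) := by
        obtain ⟨k, rfl⟩ : ∃ k, x = k + 2 := ⟨x - 2, by omega⟩
        have e1 : k + 2 - 1 - 1 = k := by omega
        have e2 : k + 2 - 1 = k + 1 := by omega
        have e3 : 4 * m - 6 = 4 * k + 2 := by omega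
        rw [e1, e2, e3]; ring
      have h1 := hf (x - 1) hi1a hi1b
      have h2 := hf x hi2a hi2b
      rw [emk1a, emk1b, Sym2.eq_swap] at h1
      rw [emk2a, emk2b, Sym2.eq_swap] at h2
      simp only [vertexSum1]
      rw [hset, Finset.sum_pair hne, h1, h2, lab1_add (x - 1) x hpar, if_pos hxm]
      exact efin
    · by_cases hx1m : x = m - 1
      · -- x = m - 1 : neighbors x-2 = m-3 and m, edges m-2 and m
        have hm3 : 3 ≤ m := by omega
        subst hx1m
        have hset : Finset.univ.filter
              (fun a => (reindexedPath m).Adj (⟨m - 1, by omega⟩ : Fin (m + 1)) a)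
            = {(⟨m - 3, by omega⟩ : Fin (m + 1)), (⟨m, by omega⟩ : Fin (m + 1))} := by
          ext a
          have ha := a.isLt
          simp only [Finset.mem_filter, Finset.mem_univ, true_and, reindexedPath,
            SimpleGraph.fromRel_adj, Finset.mem_insert, Finset.mem_singleton, Fin.ext_iff,
            ne_eq]
          omega
        have hne : (⟨m - 3, by omega⟩ : Fin (m + 1)) ≠ ⟨m, by omega⟩ := by
          simp only [ne_eq, Fin.mk.injEq]; omega
        have hi1a : 1 ≤ m - 2 := by omega
        have hi1b : m - 2 ≤ m := by omega
        have hi2a : 1 ≤ m := by omega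
        have hi2b : m ≤ m := le_refl m
        have emk1a : (⟨edgeFst m (m - 2), edgeFst_lt' m (m - 2) hi1b⟩ : Fin (m + 1))
            = ⟨m - 3, by omega⟩ :=
          hmk _ _ _ _ (by unfold edgeFst; split <;> omega)
        have emk1b : (⟨edgeSnd m (m - 2), edgeSnd_lt' m (m - 2) hi1b⟩ : Fin (m + 1))
            = ⟨m - 1, by omega⟩ :=
          hmk _ _ _ _ (by unfold edgeSnd; split <;> omega)
        have emk2a : (⟨edgeFst m m, edgeFst_lt' m m hi2b⟩ : Fin (m + 1))
            = ⟨m - 1, by omega⟩ :=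
          hmk _ _ _ _ (by unfold edgeFst; split <;> omega)
        have emk2b : (⟨edgeSnd m m, edgeSnd_lt' m m hi2b⟩ : Fin (m + 1))
            = ⟨m, by omega⟩ :=
          hmk _ _ _ _ (by unfold edgeSnd; split <;> omega)
        have hpar : edgePos m (m - 2) % 2 ≠ edgePos m m % 2 := by
          unfold edgePos; split_ifs <;> omega
        have hif : ¬ (m - 1 = m) := by omega
        have efin : 2 * (m - 2 - 1) * (n + 1) + 2 * (m - 1) * (n + 1) + 2 * (n + 2)
            = (n + 1) * (4 * (m - 1) - 4) + 2 * (n + 2) := by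
          obtain ⟨k, rfl⟩ : ∃ k, m = k + 3 := ⟨m - 3, by omega⟩
          have e1 : k + 3 - 2 - 1 = k := by omega
          have e2 : k + 3 - 1 = k + 2 := by omega
          have e3 : 4 * (k + 2) - 4 = 4 * k + 4 := by omega
          rw [e1, e2, e3]; ring
        have h1 := hf (m - 2) hi1a hi1b
        have h2 := hf m hi2a hi2b
        rw [emk1a, emk1b, Sym2.eq_swap] at h1
        rw [emk2a, emk2b] at h2
        simp only [vertexSum1]
        rw [hset, Finset.sum_pair hne, h1, h2, lab1_add (m - 2) m hpar, if_neg hif]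
        exact efin
      · -- generic case : 2 ≤ x ≤ m - 2, neighbors x-2 and x+2, edges x-1 and x+1
        obtain ⟨y, rfl⟩ : ∃ y, x = y + 2 := ⟨x - 2, by omega⟩
        have hy4 : y + 4 ≤ m := by omega
        have hset : Finset.univ.filter
              (fun a => (reindexedPath m).Adj (⟨y + 2, by omega⟩ : Fin (m + 1)) a)
            = {(⟨y, by omega⟩ : Fin (m + 1)), (⟨y + 4, by omega⟩ : Fin (m + 1))} := by
          ext a
          have ha := a.isLt
          simp only [Finset.mem_filter, Finset.mem_univ, true_and, reindexedPath,
            SimpleGraph.fromRel_adj, Finset.mem_insert, Finset.mem_singleton, Fin.ext_iff,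
            ne_eq]
          omega
        have hne : (⟨y, by omega⟩ : Fin (m + 1)) ≠ ⟨y + 4, by omega⟩ := by
          simp only [ne_eq, Fin.mk.injEq]; omega
        have hi1a : 1 ≤ y + 1 := by omega
        have hi1b : y + 1 ≤ m := by omega
        have hi2a : 1 ≤ y + 3 := by omega
        have hi2b : y + 3 ≤ m := by omega
        have emk1a : (⟨edgeFst m (y + 1), edgeFst_lt' m (y + 1) hi1b⟩ : Fin (m + 1))
            = ⟨y, by omega⟩ :=
          hmk _ _ _ _ (by unfold edgeFst; split <;> omega)
        have emk1b : (⟨edgeSnd m (y + 1), edgeSnd_lt' m (y + 1) hi1b⟩ : Fin (m + 1))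
            = ⟨y + 2, by omega⟩ :=
          hmk _ _ _ _ (by unfold edgeSnd; split <;> omega)
        have emk2a : (⟨edgeFst m (y + 3), edgeFst_lt' m (y + 3) hi2b⟩ : Fin (m + 1))
            = ⟨y + 2, by omega⟩ :=
          hmk _ _ _ _ (by unfold edgeFst; split <;> omega)
        have emk2b : (⟨edgeSnd m (y + 3), edgeSnd_lt' m (y + 3) hi2b⟩ : Fin (m + 1))
            = ⟨y + 4, by omega⟩ :=
          hmk _ _ _ _ (by unfold edgeSnd; split <;> omega)
        have hpar : edgePos m (y + 1) % 2 ≠ edgePos m (y + 3) % 2 := by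
          unfold edgePos; split_ifs <;> omega
        have efin : 2 * (y + 1 - 1) * (n + 1) + 2 * (y + 3 - 1) * (n + 1) + 2 * (n + 2)
            = (n + 1) * (4 * (y + 2) - 4) + 2 * (n + 2) := by
          have e1 : y + 1 - 1 = y := by omega
          have e2 : y + 3 - 1 = y + 2 := by omega
          have e3 : 4 * (y + 2) - 4 = 4 * y + 4 := by omega
          rw [e1, e2, e3]; ring
        have h1 := hf (y + 1) hi1a hi1b
        have h2 := hf (y + 3) hi2a hi2b
        rw [emk1a, emk1b, Sym2.eq_swap] at h1
        rw [emk2a, emk2b] at h2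
        simp only [vertexSum1]
        rw [hset, Finset.sum_pair hne, h1, h2, lab1_add (y + 1) (y + 3) hpar, if_neg hxm]
        exact efin
  constructor
  · intro j a b ha hab hb
    rw [key a ha (by omega) j, key b (by omega) hb j]
    have h : (if a = m then 4 * m - 6 else 4 * a - 4)
        < (if b = m then 4 * m - 6 else 4 * b - 4) := by
      split_ifs <;> omega
    exact Nat.add_lt_add_right ((mul_lt_mul_iff_right₀ (show 0 < n + 1 by omega)).mpr h) _
  · intro a ha ha2 j j'
    rw [key a ha ha2 j, key a ha ha2 j']
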